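/- arXiv:1502.06760 — 4 statements merged into one kernel-verified Lean document; each statement's English description precedes it below -/
import Mathlib

section
/- For every positive integer n, let f(n) be the repunit-like number with digits 1 separated by a 0, defined by f(0) = 1 and f(n) = 100·f(n-1) + 1. Then (11·f(n), 60·f(n), 61·f(n)) is a Pythagorean triple, 11·f(n) is a decimal palindrome, and neither 60·f(n) nor 61·f(n) is a decimal palindrome. -/
/-!
If `m` has the base-`b` digit string `w`, then `m * ∑_{k<n} (b ^ |w|) ^ k` has digit string `w`
repeated `n` times, and a repetition `w ⋯ w` is a palindrome exactly when `w` is. With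
`f(n) = ∑_{k≤n} 100 ^ k` and the two-digit multipliers `11`, `60`, `61`, this leaves only the
palindromicity of `11`, `60`, `61` themselves; the Pythagorean identity is `11² + 60² = 61²`.
-/

open Finset

def IsDecimalPalindrome (n : ℕ) : Prop := (Nat.digits 10 n).reverse = Nat.digits 10 n

theorem List.flatten_replicate_reverse_eq_iff {α : Type*} (L : List α) {k : ℕ} (hk : k ≠ 0) :
    (List.replicate k L).flatten.reverse = (List.replicate k L).flatten ↔ L.reverse = L := by
  rw [List.reverse_flatten, List.map_replicate, List.reverse_replicate]
  refine ⟨fun h => ?_, fun h => by rw [h]⟩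
  obtain ⟨j, rfl⟩ := Nat.exists_eq_succ_of_ne_zero hk
  simp only [List.replicate_succ, List.flatten_cons] at h
  exact (List.append_inj h L.length_reverse).1

theorem Nat.digits_mul_geom_sum {b : ℕ} (hb : 0 < b) (m n : ℕ) :
    Nat.digits b (m * ∑ k ∈ range n, (b ^ (Nat.digits b m).length) ^ k)
      = (List.replicate n (Nat.digits b m)).flatten := by
  induction n with
  | zero => simp
  | succ n ih =>
    rw [geom_sum_succ, mul_add, mul_one, mul_left_comm, add_comm, ← Nat.digits_append_digits hb,
      ih, List.replicate_succ, List.flatten_cons]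

theorem isDecimalPalindrome_mul_geom_sum_hundred_iff {m : ℕ} (hm : 10 ≤ m) (hm' : m < 100)
    (n : ℕ) :
    IsDecimalPalindrome (m * ∑ k ∈ range (n + 1), 100 ^ k) ↔ IsDecimalPalindrome m := by
  have hlen : (Nat.digits 10 m).length = 2 := by
    rw [Nat.length_digits 10 m (by norm_num) (by omega),
      Nat.log_eq_of_pow_le_of_lt_pow (m := 1) (by omega) (by omega)]
  have hdigits := Nat.digits_mul_geom_sum (b := 10) (by norm_num) m (n + 1)
  rw [hlen, show (10 : ℕ) ^ 2 = 100 by norm_num] at hdigits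
  rw [IsDecimalPalindrome, IsDecimalPalindrome, hdigits]
  exact List.flatten_replicate_reverse_eq_iff _ n.succ_ne_zero

theorem scaled_11_60_61_one_palindrome_general (n : ℕ) :
    (11 * ∑ k ∈ Finset.range (n + 1), 100 ^ k) ^ 2
      + (60 * ∑ k ∈ Finset.range (n + 1), 100 ^ k) ^ 2
      = (61 * ∑ k ∈ Finset.range (n + 1), 100 ^ k) ^ 2 ∧
    IsDecimalPalindrome (11 * ∑ k ∈ Finset.range (n + 1), 100 ^ k) ∧
    ¬ IsDecimalPalindrome (60 * ∑ k ∈ Finset.range (n + 1), 100 ^ k) ∧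
    ¬ IsDecimalPalindrome (61 * ∑ k ∈ Finset.range (n + 1), 100 ^ k) := by
  have hundred_iff m (hm : 10 ≤ m ∧ m < 100) :=
    isDecimalPalindrome_mul_geom_sum_hundred_iff hm.1 hm.2 n
  rw [hundred_iff 11 (by norm_num), hundred_iff 60 (by norm_num), hundred_iff 61 (by norm_num)]
  refine ⟨by ring, ?_, ?_, ?_⟩ <;> norm_num [IsDecimalPalindrome]

theorem scaled_11_60_61_one_palindrome (n : ℕ) (hn : 0 < n) :
    (11 * ∑ k ∈ Finset.range (n + 1), 100 ^ k) ^ 2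
      + (60 * ∑ k ∈ Finset.range (n + 1), 100 ^ k) ^ 2
      = (61 * ∑ k ∈ Finset.range (n + 1), 100 ^ k) ^ 2 ∧
    IsDecimalPalindrome (11 * ∑ k ∈ Finset.range (n + 1), 100 ^ k) ∧
    ¬ IsDecimalPalindrome (60 * ∑ k ∈ Finset.range (n + 1), 100 ^ k) ∧
    ¬ IsDecimalPalindrome (61 * ∑ k ∈ Finset.range (n + 1), 100 ^ k) :=
  scaled_11_60_61_one_palindrome_general n
end

section
/- For every positive integer k, setting m = (10^k + 1)^2, the triple (3m, 4m, 5m) is a Pythagorean triple in which 3m and 4m are decimal palindromes but 5m is not. -/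
lemma digits_combo (j a b' : ℕ) (ha : a ≠ 0) (ha' : a < 10) (hb : 0 < b') :
    Nat.digits 10 (a + 10 ^ (j + 1) * b') = a :: (List.replicate j 0 ++ Nat.digits 10 b') := by
  have h := Nat.digits_append_zeroes_append_digits (b := 10) (k := j) (m := b') (n := a)
    (by norm_num) hb
  rw [Nat.digits_of_lt 10 a ha ha'] at h
  simp only [List.length_singleton] at h
  rw [add_comm j 1, ← h]
  simp

theorem square_repunit_scaled_3_4_5 (k : ℕ) (hk : 0 < k) :
    (3 * (10 ^ k + 1) ^ 2) ^ 2 + (4 * (10 ^ k + 1) ^ 2) ^ 2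
      = (5 * (10 ^ k + 1) ^ 2) ^ 2 ∧
    IsDecimalPalindrome (3 * (10 ^ k + 1) ^ 2) ∧
    IsDecimalPalindrome (4 * (10 ^ k + 1) ^ 2) ∧
    ¬ IsDecimalPalindrome (5 * (10 ^ k + 1) ^ 2) := by
  obtain ⟨j, rfl⟩ : ∃ j, k = j + 1 := ⟨k - 1, by omega⟩
  refine ⟨by ring, ?_, ?_, ?_⟩
  · have h3 : 3 * (10 ^ (j+1) + 1) ^ 2 = 3 + 10 ^ (j+1) * (6 + 10 ^ (j+1) * 3) := by ring
    rw [IsDecimalPalindrome, h3, digits_combo j 3 _ (by norm_num) (by norm_num) (by positivity),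
      digits_combo j 6 3 (by norm_num) (by norm_num) (by norm_num)]
    simp [Nat.digits_of_lt 10 3, List.reverse_append, List.reverse_replicate]
  · have h4 : 4 * (10 ^ (j+1) + 1) ^ 2 = 4 + 10 ^ (j+1) * (8 + 10 ^ (j+1) * 4) := by ring
    rw [IsDecimalPalindrome, h4, digits_combo j 4 _ (by norm_num) (by norm_num) (by positivity),
      digits_combo j 8 4 (by norm_num) (by norm_num) (by norm_num)]
    simp [Nat.digits_of_lt 10 4, List.reverse_append, List.reverse_replicate]
  · rw [IsDecimalPalindrome]
    match j with
    | 0 =>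
      have : 5 * (10 ^ (0+1) + 1) ^ 2 = 605 := by norm_num
      rw [this]
      norm_num
    | i + 1 =>
      have h5 : 5 * (10 ^ (i+1+1) + 1) ^ 2
          = 5 + 10 ^ (i+1+1) * (10 + 10 ^ (i+1+1) * 5) := by ring
      have hpos : 0 < 10 + 10 ^ (i+1+1) * 5 := by positivity
      have hinner : Nat.digits 10 (10 + 10 ^ (i+1+1) * 5)
          = 0 :: (1 :: (List.replicate i 0 ++ [5])) := by
        have hM : 10 + 10 ^ (i+1+1) * 5 = 10 * (1 + 10 ^ (i+1) * 5) := by ring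
        rw [hM, Nat.digits_def' (by norm_num : (1:ℕ) < 10) (by positivity)]
        have : 10 * (1 + 10 ^ (i+1) * 5) % 10 = 0 := by omega
        rw [this, Nat.mul_div_cancel_left _ (by norm_num : (0:ℕ) < 10),
          digits_combo i 1 5 (by norm_num) (by norm_num) (by norm_num)]
        norm_num
      rw [h5, digits_combo (i+1) 5 _ (by norm_num) (by norm_num) hpos, hinner]
      set L : List ℕ := 5 :: (List.replicate (i+1) 0 ++ 0 :: 1 :: (List.replicate i 0 ++ [5]))
        with hL
      intro h
      have hlen : L.length = 2 * i + 5 := by simp [hL]; omega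
      have e1 : L[i+1]? = some 0 := by
        rw [hL]
        rw [List.getElem?_cons_succ, List.getElem?_append_left (by simp)]
        simp
      have e2 : L[i+3]? = some 1 := by
        rw [hL]
        show (5 :: _)[i+2+1]? = some 1
        rw [List.getElem?_cons_succ, List.getElem?_append_right (by simp)]
        simp
      have e3 : L.reverse[i+1]? = L[i+3]? := by
        rw [List.getElem?_reverse (by rw [hlen]; omega), hlen]
        congr 1
        omega
      rw [h, e1, e2] at e3
      exact absurd e3 (by simp)
end

section
/- There are infinitely many Pythagorean triples (x, y, z) with x^2 + y^2 = z^2 such that exactly two of x, y, z are decimal palindromes. -/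
def repunit (b : ℕ) : ℕ → ℕ
  | 0 => 0
  | k + 1 => 1 + b * repunit b k

theorem le_repunit {b : ℕ} (hb : 1 ≤ b) (k : ℕ) : k ≤ repunit b k := by
  induction k with
  | zero => exact Nat.zero_le _
  | succ k ih =>
    have : repunit b k ≤ b * repunit b k := Nat.le_mul_of_pos_left _ hb
    simp only [repunit]
    omega

theorem digits_mul_repunit {b c : ℕ} (hc : c ≠ 0) (hcb : c < b) (k : ℕ) :
    Nat.digits b (c * repunit b k) = List.replicate k c := by
  induction k with
  | zero => simp [repunit]
  | succ k ih =>
    have hsplit : c * repunit b (k + 1) = c + b * (c * repunit b k) := by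
      simp only [repunit]
      ring
    rw [hsplit, Nat.digits_add b (by omega) c _ hcb (Or.inl hc), ih, List.replicate_succ]

theorem Nat.digits_reverse_ne_of_base_dvd {b n : ℕ} (hb : 1 < b) (hbn : b ∣ n) (hn : n ≠ 0) :
    (Nat.digits b n).reverse ≠ Nat.digits b n := by
  intro hpal
  obtain ⟨m, rfl⟩ := hbn
  have hlast := Nat.getLast_digit_ne_zero b hn
  have hhead : (Nat.digits b (b * m)).head? = some 0 := by
    rw [Nat.digits_base_mul hb (Nat.pos_of_ne_zero (right_ne_zero_of_mul hn))]
    rfl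
  rw [← hpal, List.head?_reverse,
    List.getLast?_eq_some_getLast (Nat.digits_ne_nil_iff_ne_zero.mpr hn), Option.some_inj] at hhead
  exact hlast hhead

theorem isDecimalPalindrome_mul_repunit {c : ℕ} (hc : c ≠ 0) (hc10 : c < 10) (k : ℕ) :
    IsDecimalPalindrome (c * repunit 10 k) := by
  rw [IsDecimalPalindrome, digits_mul_repunit hc hc10, List.reverse_replicate]

theorem not_isDecimalPalindrome_of_ten_dvd {n : ℕ} (h10 : 10 ∣ n) (hn : n ≠ 0) :
    ¬ IsDecimalPalindrome n :=
  Nat.digits_reverse_ne_of_base_dvd (by norm_num) h10 hn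

theorem infinitely_many_triples_exactly_two_palindromes (N : ℕ) :
    ∃ x y z : ℕ, x ^ 2 + y ^ 2 = z ^ 2 ∧ z > N ∧
      ((IsDecimalPalindrome x ∧ IsDecimalPalindrome y ∧ ¬ IsDecimalPalindrome z) ∨
       (IsDecimalPalindrome x ∧ ¬ IsDecimalPalindrome y ∧ IsDecimalPalindrome z) ∨
       (¬ IsDecimalPalindrome x ∧ IsDecimalPalindrome y ∧ IsDecimalPalindrome z)) := by
  set r := repunit 10 (N + 1)
  have hr : N < r := le_repunit (by norm_num) (N + 1)
  refine ⟨6 * r, 8 * r, 10 * r, by ring, by omega, Or.inl ⟨?_, ?_, ?_⟩⟩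
  · exact isDecimalPalindrome_mul_repunit (by norm_num) (by norm_num) _
  · exact isDecimalPalindrome_mul_repunit (by norm_num) (by norm_num) _
  · exact not_isDecimalPalindrome_of_ten_dvd (dvd_mul_right 10 r) (by omega)
end

section
/- If (x, y, z) is a primitive Pythagorean triple with y even and all of x, y, z decimal palindromes, then 5 divides x or 5 divides z (equivalently, 5 does not divide y). -/
theorem Nat.not_dvd_of_digits_reverse_eq {b n : ℕ} (hb : 1 < b) (hn : n ≠ 0)
    (hpal : (Nat.digits b n).reverse = Nat.digits b n) : ¬ b ∣ n := by
  intro hdvd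
  apply Nat.getLast_digit_ne_zero b hn
  rw [← List.head_reverse (List.reverse_ne_nil_iff.mpr (Nat.digits_ne_nil_iff_ne_zero.mpr hn))]
  simp only [hpal]
  simp only [Nat.digits_def' hb (Nat.pos_of_ne_zero hn), Nat.mod_eq_zero_of_dvd hdvd,
    List.head_cons]

theorem IsDecimalPalindrome.not_ten_dvd {n : ℕ} (hpal : IsDecimalPalindrome n) (hn : n ≠ 0) :
    ¬ 10 ∣ n :=
  Nat.not_dvd_of_digits_reverse_eq (by norm_num) hn hpal

theorem Nat.five_dvd_of_sq_add_sq_eq_sq {x y z : ℕ} (h : x ^ 2 + y ^ 2 = z ^ 2)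
    (hx : ¬ 5 ∣ x) (hz : ¬ 5 ∣ z) : 5 ∣ y := by
  have hmod5 : ∀ a b c : ZMod 5, a ^ 2 + b ^ 2 = c ^ 2 → a ≠ 0 → c ≠ 0 → b = 0 := by decide
  simp only [← ZMod.natCast_eq_zero_iff] at hx hz ⊢
  exact hmod5 x y z (by exact_mod_cast congrArg (Nat.cast : ℕ → ZMod 5) h) hx hz

theorem all_palindrome_triple_five_divides_leg_or_hyp_general (x y z : ℕ)
    (hy : 0 < y)
    (h : x ^ 2 + y ^ 2 = z ^ 2)
    (hey : Even y)
    (hpy : IsDecimalPalindrome y) :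
    5 ∣ x ∨ 5 ∣ z := by
  by_contra! hx5z
  have h5y : 5 ∣ y := Nat.five_dvd_of_sq_add_sq_eq_sq h hx5z.1 hx5z.2
  have h10y : 10 ∣ y :=
    Nat.Coprime.mul_dvd_of_dvd_of_dvd (by norm_num) (even_iff_two_dvd.mp hey) h5y
  exact hpy.not_ten_dvd hy.ne' h10y

theorem all_palindrome_triple_five_divides_leg_or_hyp (x y z : ℕ)
    (hx : 0 < x) (hy : 0 < y) (hz : 0 < z)
    (h : x ^ 2 + y ^ 2 = z ^ 2)
    (hgcd : Nat.gcd x (Nat.gcd y z) = 1)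
    (hey : Even y)
    (hpx : IsDecimalPalindrome x) (hpy : IsDecimalPalindrome y)
    (hpz : IsDecimalPalindrome z) :
    5 ∣ x ∨ 5 ∣ z :=
  all_palindrome_triple_five_divides_leg_or_hyp_general x y z hy h hey hpy
end
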